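/- arXiv:1401.1789 — 3 statements merged into one kernel-verified Lean document; each statement's English description precedes it below -/
import Mathlib

section
/- Let m ∈ L^q(Ω) with m ≥ 0 and w ∈ L^1(Ω; ℝ^d) with w = 0 a.e. on {m = 0}, and suppose ∫_{m>0} |w|^{r'} / m^{r'-1} < ∞. Then w ∈ L^{s}(Ω; ℝ^d) where s = r'q/(r'+q-1), and ‖w‖_{L^s}^s ≤ ‖m‖_{L^q}^{(r'-1)q/(r'+q-1)} · (∫_{m>0} |w|^{r'}/m^{r'-1})^{q/(r'+q-1)}. -/
/-!
On `{m > 0}` write `|w|^s = (|w|^{r'} / m^{r'-1})^a · (m^q)^b` with `a = q/(r'+q-1)` and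
`b = (r'-1)/(r'+q-1)`, so that `a + b = 1`; Hölder's inequality in the form
`∫ f^a g^b ≤ (∫ f)^a (∫ g)^b` then bounds `∫_{m>0} |w|^s`. Off `{m > 0}` we have `m = 0`, hence
`w = 0`, so nothing is lost by restricting to `{m > 0}`.
-/

open MeasureTheory

theorem Real.rpow_div_rpow_mul_rpow_eq {t m : ℝ} (ht : 0 ≤ t) (hm : 0 < m) (r q : ℝ) :
    (t ^ r / m ^ (r - 1)) ^ (q / (r + q - 1)) * (m ^ q) ^ ((r - 1) / (r + q - 1)) =
      t ^ (r * q / (r + q - 1)) := by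
  have hexp : q * ((r - 1) / (r + q - 1)) = (r - 1) * (q / (r + q - 1)) := by ring
  rw [Real.div_rpow (Real.rpow_nonneg ht _) (Real.rpow_nonneg hm.le _), ← Real.rpow_mul ht,
    ← Real.rpow_mul hm.le, ← Real.rpow_mul hm.le, hexp,
    div_mul_cancel₀ _ (Real.rpow_pos_of_pos hm _).ne', mul_div_assoc]

namespace MeasureTheory

section RpowMulRpow

variable {α : Type*} [MeasurableSpace α] {μ : Measure α} {f g : α → ℝ} {a b : ℝ}

theorem lintegral_ofReal_rpow_mul_rpow_le (hf : Integrable f μ) (hg : Integrable g μ)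
    (hf0 : 0 ≤ᵐ[μ] f) (hg0 : 0 ≤ᵐ[μ] g) (ha : 0 ≤ a) (hb : 0 ≤ b) (hab : a + b = 1) :
    ∫⁻ x, ENNReal.ofReal (f x ^ a * g x ^ b) ∂μ ≤
      ENNReal.ofReal ((∫ x, f x ∂μ) ^ a * (∫ x, g x ∂μ) ^ b) :=
  calc ∫⁻ x, ENNReal.ofReal (f x ^ a * g x ^ b) ∂μ
      = ∫⁻ x, ENNReal.ofReal (f x) ^ a * ENNReal.ofReal (g x) ^ b ∂μ := by
        refine lintegral_congr_ae ?_
        filter_upwards [hf0, hg0] with x hfx hgx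
        rw [ENNReal.ofReal_mul (Real.rpow_nonneg hfx _), ENNReal.ofReal_rpow_of_nonneg hfx ha,
          ENNReal.ofReal_rpow_of_nonneg hgx hb]
    _ ≤ (∫⁻ x, ENNReal.ofReal (f x) ∂μ) ^ a * (∫⁻ x, ENNReal.ofReal (g x) ∂μ) ^ b :=
        ENNReal.lintegral_mul_norm_pow_le hf.1.aemeasurable.ennreal_ofReal
          hg.1.aemeasurable.ennreal_ofReal ha hb hab
    _ = ENNReal.ofReal ((∫ x, f x ∂μ) ^ a * (∫ x, g x ∂μ) ^ b) := by
        rw [← ofReal_integral_eq_lintegral_ofReal hf hf0,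
          ← ofReal_integral_eq_lintegral_ofReal hg hg0,
          ENNReal.ofReal_rpow_of_nonneg (integral_nonneg_of_ae hf0) ha,
          ENNReal.ofReal_rpow_of_nonneg (integral_nonneg_of_ae hg0) hb,
          ENNReal.ofReal_mul (Real.rpow_nonneg (integral_nonneg_of_ae hf0) _)]

theorem Integrable.rpow_mul_rpow_of_add_eq_one (hf : Integrable f μ) (hg : Integrable g μ)
    (hf0 : 0 ≤ᵐ[μ] f) (hg0 : 0 ≤ᵐ[μ] g) (ha : 0 ≤ a) (hb : 0 ≤ b) (hab : a + b = 1) :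
    Integrable (fun x => f x ^ a * g x ^ b) μ := by
  refine ⟨((hf.1.aemeasurable.pow_const a).mul
    (hg.1.aemeasurable.pow_const b)).aestronglyMeasurable, ?_⟩
  have hfg0 : 0 ≤ᵐ[μ] fun x => f x ^ a * g x ^ b := by
    filter_upwards [hf0, hg0] with x hfx hgx
      using mul_nonneg (Real.rpow_nonneg hfx _) (Real.rpow_nonneg hgx _)
  rw [hasFiniteIntegral_iff_ofReal hfg0]
  exact (lintegral_ofReal_rpow_mul_rpow_le hf hg hf0 hg0 ha hb hab).trans_lt ENNReal.ofReal_lt_top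

theorem integral_rpow_mul_rpow_le_of_add_eq_one (hf : Integrable f μ) (hg : Integrable g μ)
    (hf0 : 0 ≤ᵐ[μ] f) (hg0 : 0 ≤ᵐ[μ] g) (ha : 0 ≤ a) (hb : 0 ≤ b) (hab : a + b = 1) :
    ∫ x, f x ^ a * g x ^ b ∂μ ≤ (∫ x, f x ∂μ) ^ a * (∫ x, g x ∂μ) ^ b := by
  have hfg0 : 0 ≤ᵐ[μ] fun x => f x ^ a * g x ^ b := by
    filter_upwards [hf0, hg0] with x hfx hgx
      using mul_nonneg (Real.rpow_nonneg hfx _) (Real.rpow_nonneg hgx _)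
  rw [integral_eq_lintegral_of_nonneg_ae hfg0
    (hf.rpow_mul_rpow_of_add_eq_one hg hf0 hg0 ha hb hab).1]
  exact ENNReal.toReal_le_of_le_ofReal
    (mul_nonneg (Real.rpow_nonneg (integral_nonneg_of_ae hf0) _)
      (Real.rpow_nonneg (integral_nonneg_of_ae hg0) _))
    (lintegral_ofReal_rpow_mul_rpow_le hf hg hf0 hg0 ha hb hab)

end RpowMulRpow

theorem integral_rpow_le_of_integrable_rpow_div_rpow {α : Type*} [MeasurableSpace α]
    {μ : Measure α} {u m : α → ℝ} {r q : ℝ} (hr : 1 ≤ r) (hq : 0 < q) (hu : ∀ x, 0 ≤ u x)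
    (hm : ∀ᵐ x ∂μ, 0 < m x) (hum : Integrable (fun x => u x ^ r / m x ^ (r - 1)) μ)
    (hmq : Integrable (fun x => m x ^ q) μ) :
    Integrable (fun x => u x ^ (r * q / (r + q - 1))) μ ∧
      ∫ x, u x ^ (r * q / (r + q - 1)) ∂μ ≤
        (∫ x, m x ^ q ∂μ) ^ ((r - 1) / (r + q - 1)) *
          (∫ x, u x ^ r / m x ^ (r - 1) ∂μ) ^ (q / (r + q - 1)) := by
  have hD : 0 < r + q - 1 := by linarith
  have ha : 0 ≤ q / (r + q - 1) := by positivity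
  have hb : 0 ≤ (r - 1) / (r + q - 1) := div_nonneg (by linarith) hD.le
  have hab : q / (r + q - 1) + (r - 1) / (r + q - 1) = 1 := by field_simp; ring
  have hum0 : 0 ≤ᵐ[μ] fun x => u x ^ r / m x ^ (r - 1) := by
    filter_upwards [hm] with x hx using div_nonneg (Real.rpow_nonneg (hu x) _) (by positivity)
  have hmq0 : 0 ≤ᵐ[μ] fun x => m x ^ q := by
    filter_upwards [hm] with x hx using by positivity
  have hsplit : (fun x => u x ^ (r * q / (r + q - 1))) =ᵐ[μ] fun x =>
      (u x ^ r / m x ^ (r - 1)) ^ (q / (r + q - 1)) * (m x ^ q) ^ ((r - 1) / (r + q - 1)) := by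
    filter_upwards [hm] with x hx using (Real.rpow_div_rpow_mul_rpow_eq (hu x) hx r q).symm
  exact ⟨(hum.rpow_mul_rpow_of_add_eq_one hmq hum0 hmq0 ha hb hab).congr hsplit.symm,
    (integral_congr_ae hsplit).trans_le <|
      (integral_rpow_mul_rpow_le_of_add_eq_one hum hmq hum0 hmq0 ha hb hab).trans_eq
        (mul_comm _ _)⟩

end MeasureTheory

theorem drift_integrability_general
    {Ω : Type*} [MeasurableSpace Ω] (μ : Measure Ω)
    (d : ℕ) (m : Ω → ℝ) (w : Ω → EuclideanSpace ℝ (Fin d))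
    (r' q : ℝ) (hr' : 1 < r') (hq : 1 < q)
    (hm0 : ∀ᵐ x ∂μ, 0 ≤ m x)
    (hmq : MemLp m (ENNReal.ofReal q) μ)
    (hw : AEStronglyMeasurable w μ)
    (hw0 : ∀ᵐ x ∂μ, m x = 0 → w x = 0)
    (hfin : IntegrableOn (fun x => ‖w x‖ ^ r' / m x ^ (r' - 1)) {x | 0 < m x} μ) :
    MemLp w (ENNReal.ofReal (r' * q / (r' + q - 1))) μ ∧
    (∫ x, ‖w x‖ ^ (r' * q / (r' + q - 1)) ∂μ) ≤
      (∫ x, |m x| ^ q ∂μ) ^ ((r' - 1) / (r' + q - 1)) *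
        (∫ x in {x | 0 < m x}, ‖w x‖ ^ r' / m x ^ (r' - 1) ∂μ) ^ (q / (r' + q - 1)) := by
  set S := {x | 0 < m x}
  have hs : 0 < r' * q / (r' + q - 1) := div_pos (by positivity) (by linarith)
  have hm_abs : (fun x => |m x| ^ q) =ᵐ[μ] fun x => m x ^ q := by
    filter_upwards [hm0] with x hx using by rw [abs_of_nonneg hx]
  have hmq0 : 0 ≤ᵐ[μ] fun x => m x ^ q := by
    filter_upwards [hm0] with x hx using Real.rpow_nonneg hx q
  have hmq_int : Integrable (fun x => m x ^ q) μ := by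
    refine Integrable.congr ?_ hm_abs
    simpa [ENNReal.toReal_ofReal (by linarith : 0 ≤ q)] using
      hmq.integrable_norm_rpow (by simp; linarith) ENNReal.ofReal_ne_top
  have hm_pos : ∀ᵐ x ∂μ.restrict S, 0 < m x :=
    ae_restrict_mem₀ (nullMeasurableSet_lt aemeasurable_const hmq.1.aemeasurable)
  obtain ⟨hws_on, hle⟩ := integral_rpow_le_of_integrable_rpow_div_rpow hr'.le (by linarith)
    (fun x => norm_nonneg (w x)) hm_pos hfin hmq_int.restrict
  have hw_off : ∀ᵐ x ∂μ, x ∉ S → ‖w x‖ ^ (r' * q / (r' + q - 1)) = 0 := by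
    filter_upwards [hm0, hw0] with x hx0 hxw hxS
    rw [hxw (le_antisymm (not_lt.1 hxS) hx0), norm_zero, Real.zero_rpow hs.ne']
  refine ⟨(integrable_norm_rpow_iff hw (by simpa using hs) ENNReal.ofReal_ne_top).1 ?_, ?_⟩
  · rw [ENNReal.toReal_ofReal hs.le]
    exact IntegrableOn.integrable_of_ae_notMem_eq_zero hws_on hw_off
  rw [integral_congr_ae hm_abs, ← setIntegral_eq_integral_of_ae_compl_eq_zero hw_off]
  refine hle.trans (mul_le_mul_of_nonneg_right ?_ (Real.rpow_nonneg (integral_nonneg_of_ae ?_) _))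
  · exact Real.rpow_le_rpow (integral_nonneg_of_ae (ae_restrict_of_ae hmq0))
      (setIntegral_le_integral hmq_int hmq0) (div_nonneg (by linarith) (by linarith))
  · filter_upwards [hm_pos] with x hx using by positivity

/-- Hölder estimate: if `m ∈ L^q`, `m ≥ 0`, `w` vanishes where `m` does, and
`∫ |w|^{r'}/m^{r'-1} < ∞`, then `w ∈ L^s` with `s = r'q/(r'+q-1)` and the
corresponding norm estimate holds. -/
theorem drift_integrability
    {Ω : Type*} [MeasurableSpace Ω] (μ : Measure Ω) [IsFiniteMeasure μ]
    (d : ℕ) (m : Ω → ℝ) (w : Ω → EuclideanSpace ℝ (Fin d))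
    (r' q : ℝ) (hr' : 1 < r') (hq : 1 < q)
    (hm0 : ∀ᵐ x ∂μ, 0 ≤ m x)
    (hmq : MemLp m (ENNReal.ofReal q) μ)
    (hw : AEStronglyMeasurable w μ)
    (hw0 : ∀ᵐ x ∂μ, m x = 0 → w x = 0)
    (hfin : IntegrableOn (fun x => ‖w x‖ ^ r' / m x ^ (r' - 1)) {x | 0 < m x} μ) :
    MemLp w (ENNReal.ofReal (r' * q / (r' + q - 1))) μ ∧
    (∫ x, ‖w x‖ ^ (r' * q / (r' + q - 1)) ∂μ) ≤
      (∫ x, |m x| ^ q ∂μ) ^ ((r' - 1) / (r' + q - 1)) *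
        (∫ x in {x | 0 < m x}, ‖w x‖ ^ r' / m x ^ (r' - 1) ∂μ) ^ (q / (r' + q - 1)) :=
  drift_integrability_general μ d m w r' q hr' hq hm0 hmq hw hw0 hfin
end

section
/- Let H : ℝ^d → ℝ be convex and superlinear with conjugate H*, and let F : ℝ → (-∞,+∞] be convex, proper, equal to +∞ on negatives, with conjugate F*(a) = sup_{m≥0}(ma - F(m)). Then for every λ ∈ ℝ and ξ ∈ ℝ^d, inf over (m,w) ∈ [0,∞) × ℝ^d of [m H*(-w/m) + F(m) + ⟨ξ, w⟩ - λ m] equals -F*(λ + H(ξ)), with the convention m H*(-w/m) = +∞ if m = 0, w ≠ 0 and = 0 if m = w = 0. -/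
/-!
For `m > 0` the substitution `q = -w/m` turns the inner infimum over `w` into
`m · inf_q (H*(q) - ⟪ξ, q⟫) = -m H(ξ)`. The inequality `≥` is Fenchel–Young; equality is attained
at a subgradient `v` of `H` at `ξ`, which exists because `H` is convex and continuous
(separate `(ξ, H ξ)` from the open strict epigraph). The infimum over `(m, w)` is therefore
`inf_{m ≥ 0} (F(m) - m (λ + H(ξ))) = -F*(λ + H(ξ))`, the point `m = 0` contributing `F(0)` only
through `w = 0`.
-/

open Set
open scoped RealInnerProductSpace

theorem EReal.neg_iSup {ι : Sort*} (f : ι → EReal) : -(⨆ i, f i) = ⨅ i, -f i :=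
  EReal.negOrderIso.map_iSup f

theorem EReal.neg_coe_sub (a : ℝ) (x : EReal) : -((a : EReal) - x) = x + ((-a : ℝ) : EReal) := by
  rw [EReal.neg_sub (.inl (EReal.coe_ne_bot a)) (.inl (EReal.coe_ne_top a)), add_comm, EReal.coe_neg]

theorem EReal.coe_add_add_coe (a b : ℝ) (x : EReal) :
    (a : EReal) + x + (b : EReal) = x + ((a + b : ℝ) : EReal) := by
  rw [add_comm (a : EReal), add_assoc, EReal.coe_add]

section Subgradient

variable {E : Type*} [AddCommGroup E] [TopologicalSpace E] [IsTopologicalAddGroup E]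
  [Module ℝ E] [ContinuousSMul ℝ E] {f : E → ℝ}

theorem ConvexOn.exists_subgradient (hf : ConvexOn ℝ univ f) (hc : Continuous f) (x : E) :
    ∃ φ : StrongDual ℝ E, ∀ y, f x + φ (y - x) ≤ f y := by
  have hopen : IsOpen {p : E × ℝ | p.1 ∈ univ ∧ f p.1 < p.2} := by
    simp only [mem_univ, true_and]
    exact isOpen_lt (hc.comp continuous_fst) continuous_snd
  obtain ⟨L, hL⟩ := geometric_hahn_banach_open_point hf.convex_strict_epigraph hopen
    (by simp : (x, f x) ∉ {p : E × ℝ | p.1 ∈ univ ∧ f p.1 < p.2})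
  set ℓ := L.comp (.inl ℝ E ℝ)
  set c := L (0, 1)
  have hLapply (y : E) (t : ℝ) : L (y, t) = ℓ y + t * c := by
    rw [← smul_eq_mul, ← map_smul, ContinuousLinearMap.comp_apply, ← map_add]
    simp
  have hLlt (y : E) {t : ℝ} (ht : f y < t) : ℓ y + t * c < ℓ x + f x * c := by
    simpa only [hLapply] using hL (y, t) ⟨mem_univ y, ht⟩
  have hc : c < 0 := by linarith [hLlt x (lt_add_one (f x))]
  have hsupport (y : E) : ℓ y + f y * c ≤ ℓ x + f x * c := by
    -- let `t ↓ f y` in `hLlt`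
    refine le_of_forall_pos_lt_add fun ε hε => ?_
    have := hLlt y (lt_add_of_pos_right (f y) (div_pos hε (neg_pos.2 hc)))
    rw [add_mul, div_mul_eq_mul_div, div_neg, mul_div_cancel_right₀ _ hc.ne] at this
    linarith
  refine ⟨(-c)⁻¹ • ℓ, fun y => ?_⟩
  show f x + (-c)⁻¹ * ℓ (y - x) ≤ f y
  rw [map_sub, ← le_sub_iff_add_le', inv_mul_le_iff₀ (neg_pos.2 hc)]
  linarith [hsupport y]

end Subgradient

section FenchelConjugate

variable {E : Type*} [NormedAddCommGroup E] [InnerProductSpace ℝ E] {H : E → ℝ}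

theorem ConvexOn.exists_subgradient_inner [CompleteSpace E] (hH : ConvexOn ℝ univ H)
    (hc : Continuous H) (ξ : E) : ∃ v : E, ∀ p, H ξ + ⟪v, p - ξ⟫ ≤ H p := by
  obtain ⟨φ, hφ⟩ := hH.exists_subgradient hc ξ
  exact ⟨(InnerProductSpace.toDual ℝ E).symm φ, by
    simpa only [InnerProductSpace.toDual_symm_apply] using hφ⟩

theorem bddAbove_range_inner_sub_of_superlinear
    (hH : ∀ c : ℝ, ∃ b : ℝ, ∀ p, c * ‖p‖ - b ≤ H p) (q : E) :
    BddAbove (range fun p => ⟪p, q⟫ - H p) := by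
  obtain ⟨b, hb⟩ := hH ‖q‖
  refine ⟨b, forall_mem_range.2 fun p => ?_⟩
  linarith [real_inner_le_norm p q, hb p, mul_comm ‖p‖ ‖q‖]

theorem iSup_inner_sub_eq_of_subgradient {ξ v : E} (hv : ∀ p, H ξ + ⟪v, p - ξ⟫ ≤ H p) :
    ⨆ p, (⟪p, v⟫ - H p) = ⟪ξ, v⟫ - H ξ := by
  have hle (p : E) : ⟪p, v⟫ - H p ≤ ⟪ξ, v⟫ - H ξ := by
    have := hv p
    rw [inner_sub_right, real_inner_comm p v, real_inner_comm ξ v] at this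
    linarith
  exact le_antisymm (ciSup_le hle) (le_ciSup ⟨_, forall_mem_range.2 hle⟩ ξ)

theorem neg_mul_le_mul_add_inner_of_le_conj {Hstar : E → ℝ} {ξ : E}
    (hHstar : ∀ q, ⟪ξ, q⟫ - H ξ ≤ Hstar q) {m : ℝ} (hm : 0 < m) (w : E) :
    -(m * H ξ) ≤ m * Hstar (-(m⁻¹ • w)) + ⟪ξ, w⟫ := by
  have := mul_le_mul_of_nonneg_left (hHstar (-(m⁻¹ • w))) hm.le
  rw [inner_neg_right, real_inner_smul_right, mul_sub, mul_neg, ← mul_assoc,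
    mul_inv_cancel₀ hm.ne', one_mul] at this
  linarith

end FenchelConjugate

/-- The Fenchel conjugate `F*(a) = sup_{m ≥ 0} (m a - F(m))`. -/
noncomputable def fenchelPos (F : ℝ → EReal) (a : ℝ) : EReal :=
  ⨆ m : {m : ℝ // 0 ≤ m}, (((m : ℝ) * a : ℝ) : EReal) - F (m : ℝ)

theorem pointwise_duality_general
    (d : ℕ) (H Hstar : EuclideanSpace ℝ (Fin d) → ℝ)
    (hcont : Continuous H)
    (hconv : ConvexOn ℝ Set.univ H)
    (hsuper : ∀ c : ℝ, ∃ b : ℝ, ∀ p, c * ‖p‖ - b ≤ H p)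
    (hHstar : ∀ q, Hstar q = ⨆ p : EuclideanSpace ℝ (Fin d), ((inner ℝ p q : ℝ) - H p))
    (F : ℝ → EReal)
    (lam : ℝ) (ξ : EuclideanSpace ℝ (Fin d))
    (Φ : ℝ × EuclideanSpace ℝ (Fin d) → EReal)
    (hΦpos : ∀ z : ℝ × EuclideanSpace ℝ (Fin d), 0 < z.1 →
      Φ z = ((z.1 * Hstar (-(z.1⁻¹ • z.2)) : ℝ) : EReal) + F z.1 +
        (((inner ℝ ξ z.2 : ℝ) - lam * z.1 : ℝ) : EReal))
    (hΦ00 : Φ (0, 0) = F 0)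
    (hΦ0 : ∀ w : EuclideanSpace ℝ (Fin d), w ≠ 0 → Φ (0, w) = ⊤) :
    (⨅ z : {z : ℝ × EuclideanSpace ℝ (Fin d) // 0 ≤ z.1}, Φ (z : ℝ × EuclideanSpace ℝ (Fin d))) =
      -(fenchelPos F (lam + H ξ)) := by
  have hFY (q) : ⟪ξ, q⟫ - H ξ ≤ Hstar q :=
    hHstar q ▸ le_ciSup (bddAbove_range_inner_sub_of_superlinear hsuper q) ξ
  obtain ⟨v, hv⟩ := hconv.exists_subgradient_inner hcont ξ
  have hHv : Hstar v = ⟪ξ, v⟫ - H ξ := (hHstar v).trans (iSup_inner_sub_eq_of_subgradient hv)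
  have hΦ {m : ℝ} (hm : 0 < m) (w) :
      Φ (m, w) = F m + ((m * Hstar (-(m⁻¹ • w)) + ⟪ξ, w⟫ - lam * m : ℝ) : EReal) := by
    rw [hΦpos (m, w) hm, EReal.coe_add_add_coe, add_sub_assoc]
  rw [fenchelPos, EReal.neg_iSup]
  simp only [EReal.neg_coe_sub]
  refine le_antisymm (iInf_mono' fun ⟨m, hm⟩ => ?_) (iInf_mono' fun ⟨⟨m, w⟩, hm⟩ => ?_)
  · rcases hm.eq_or_lt with rfl | hm
    · exact ⟨⟨(0, 0), le_rfl⟩, by simp [hΦ00]⟩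
    · refine ⟨⟨(m, -(m • v)), hm.le⟩, (hΦ hm _).le.trans ?_⟩
      rw [smul_neg, neg_neg, smul_smul, inv_mul_cancel₀ hm.ne', one_smul, hHv, inner_neg_right,
        real_inner_smul_right]
      have : m * (⟪ξ, v⟫ - H ξ) + -(m * ⟪ξ, v⟫) - lam * m = -(m * (lam + H ξ)) := by ring
      rw [this]
  · rcases (show (0 : ℝ) ≤ m from hm).eq_or_lt with rfl | hm
    · refine ⟨⟨0, le_rfl⟩, ?_⟩
      rcases eq_or_ne w 0 with rfl | hw
      · simp [hΦ00]
      · simp [hΦ0 w hw]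
    · refine ⟨⟨m, hm.le⟩, ?_⟩
      rw [hΦ hm]
      gcongr
      linarith [neg_mul_le_mul_add_inner_of_le_conj hFY hm w]

/-- The pointwise infimum of `m H*(-w/m) + F(m) + ⟨ξ,w⟩ - λ m` over `(m,w) ∈ [0,∞) × ℝ^d`
equals `-F*(λ + H(ξ))`. -/
theorem pointwise_duality
    (d : ℕ) (H Hstar : EuclideanSpace ℝ (Fin d) → ℝ)
    (hcont : Continuous H)
    (hconv : ConvexOn ℝ Set.univ H)
    (hsuper : ∀ c : ℝ, ∃ b : ℝ, ∀ p, c * ‖p‖ - b ≤ H p)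
    (hHstar : ∀ q, Hstar q = ⨆ p : EuclideanSpace ℝ (Fin d), ((inner ℝ p q : ℝ) - H p))
    (F : ℝ → EReal)
    (hFconv : ∀ x y t : ℝ, 0 ≤ t → t ≤ 1 →
      F (t * x + (1 - t) * y) ≤ (t : EReal) * F x + ((1 - t : ℝ) : EReal) * F y)
    (hFnotbot : ∀ m : ℝ, F m ≠ ⊥)
    (hFproper : ∃ m : ℝ, F m ≠ ⊤)
    (hFneg : ∀ m : ℝ, m < 0 → F m = ⊤)
    (lam : ℝ) (ξ : EuclideanSpace ℝ (Fin d))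
    (Φ : ℝ × EuclideanSpace ℝ (Fin d) → EReal)
    (hΦpos : ∀ z : ℝ × EuclideanSpace ℝ (Fin d), 0 < z.1 →
      Φ z = ((z.1 * Hstar (-(z.1⁻¹ • z.2)) : ℝ) : EReal) + F z.1 +
        (((inner ℝ ξ z.2 : ℝ) - lam * z.1 : ℝ) : EReal))
    (hΦ00 : Φ (0, 0) = F 0)
    (hΦ0 : ∀ w : EuclideanSpace ℝ (Fin d), w ≠ 0 → Φ (0, w) = ⊤) :
    (⨅ z : {z : ℝ × EuclideanSpace ℝ (Fin d) // 0 ≤ z.1}, Φ (z : ℝ × EuclideanSpace ℝ (Fin d))) =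
      -(fenchelPos F (lam + H ξ)) :=
  pointwise_duality_general d H Hstar hcont hconv hsuper hHstar F lam ξ Φ hΦpos hΦ00 hΦ0
end

section
/- Let L : 𝕋^d × ℝ^d → ℝ be continuous with (1/(r'C))|v|^{r'} - C ≤ L(x,v) ≤ (C/r')|v|^{r'} + C and r' > 1. Fix 0 ≤ t₁ < t₂ ≤ T with t₂ - t₁ ≤ 1 and x,y ∈ 𝕋^d, and let γ(s) = x + (s-t₁)(y-x)/(t₂-t₁). Fix β ∈ (1/r, 1) with 1 - r'(1-β) > 0. For σ ∈ B₁ ⊂ ℝ^d let x_σ(s) = γ(s) + σ(s-t₁)^β on [t₁,(t₁+t₂)/2] and x_σ(s) = γ(s) + σ(t₂-s)^β on [(t₁+t₂)/2, t₂]. Then (1/|B₁|) ∫_{B₁} ∫_{t₁}^{t₂} L(x_σ(s), ẋ_σ(s)) ds dσ ≤ C'(|x-y|^{r'}(t₂-t₁)^{1-r'} + (t₂-t₁)^{1-r'(1-β)} + (t₂-t₁)) for a constant C' depending only on C, r', β, d. -/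
/-!
For `s` away from the endpoints and the midpoint, the velocity of the perturbed curve is
`(y - x)/(t₂ - t₁) ± β (s - t₁)^(β-1) σ` (resp. with `t₂ - s`), so by convexity of `|·|^{r'}`
and the growth bound on `L`, the integrand is at most a constant times
`|x - y|^{r'} (t₂ - t₁)^{-r'} + (s - t₁)^{(β-1)r'} + (t₂ - s)^{(β-1)r'} + 1`. Since
`(β - 1) r' > -1` this majorant is integrable, and integrating it gives the three terms of the
bound; averaging over `σ` in the unit ball does not change it.
-/

open MeasureTheory Set

theorem Real.add_rpow_le_two_rpow_mul {a b p : ℝ} (ha : 0 ≤ a) (hb : 0 ≤ b) (hp : 1 ≤ p) :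
    (a + b) ^ p ≤ 2 ^ (p - 1) * (a ^ p + b ^ p) := by
  lift a to NNReal using ha
  lift b to NNReal using hb
  exact_mod_cast NNReal.rpow_add_le_mul_rpow_add_rpow a b hp

-- No integrability of `f` is needed: a non-integrable `f` has integral `0 ≤ ∫ g`.
theorem integral_mono_of_right_nonneg {α : Type*} [MeasurableSpace α] {μ : Measure α}
    {f g : α → ℝ} (hg : 0 ≤ᵐ[μ] g) (hgi : Integrable g μ) (h : f ≤ᵐ[μ] g) :
    ∫ a, f a ∂μ ≤ ∫ a, g a ∂μ := by
  by_cases hfi : Integrable f μ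
  · exact integral_mono_ae hfi hgi h
  · exact integral_undef hfi ▸ integral_nonneg_of_ae hg

theorem one_div_measure_mul_setIntegral_le {α : Type*} [MeasurableSpace α] {μ : Measure α}
    {s : Set α} {f : α → ℝ} {c : ℝ} (hs : MeasurableSet s) (hμs : μ s ≠ ⊤) (hc : 0 ≤ c)
    (hf : ∀ x ∈ s, f x ≤ c) :
    1 / (μ s).toReal * ∫ x in s, f x ∂μ ≤ c := by
  have hint : ∫ x in s, f x ∂μ ≤ (μ s).toReal * c := by
    simpa [setIntegral_const, measureReal_def] using
      integral_mono_of_right_nonneg (ae_of_all _ fun _ => hc) (integrableOn_const hμs)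
        (ae_restrict_of_forall_mem hs hf)
  rcases eq_or_ne (μ s).toReal 0 with h0 | h0
  · simp [h0, hc]
  · calc 1 / (μ s).toReal * ∫ x in s, f x ∂μ ≤ 1 / (μ s).toReal * ((μ s).toReal * c) := by
          gcongr
    _ = c := by field_simp

theorem intervalIntegrable_rpow_sub_add_rpow_sub {p t₁ t₂ : ℝ} (hp : -1 < p) :
    IntervalIntegrable (fun s => (s - t₁) ^ p + (t₂ - s) ^ p) volume t₁ t₂ := by
  have hi := intervalIntegral.intervalIntegrable_rpow' (a := 0) (b := t₂ - t₁) hp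
  refine IntervalIntegrable.add ?_ ?_
  · simpa using hi.comp_sub_right t₁
  · simpa using (hi.comp_sub_left t₂).symm

theorem integral_rpow_sub_add_rpow_sub {p t₁ t₂ : ℝ} (hp : -1 < p) :
    ∫ s in t₁..t₂, ((s - t₁) ^ p + (t₂ - s) ^ p) = 2 * (t₂ - t₁) ^ (p + 1) / (p + 1) := by
  have hi := intervalIntegral.intervalIntegrable_rpow' (a := 0) (b := t₂ - t₁) hp
  rw [intervalIntegral.integral_add (by simpa using hi.comp_sub_right t₁)
      (by simpa using (hi.comp_sub_left t₂).symm),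
    intervalIntegral.integral_comp_sub_right (fun u => u ^ p),
    intervalIntegral.integral_comp_sub_left (fun u => u ^ p), integral_rpow (Or.inl hp),
    integral_rpow (Or.inl hp)]
  simp [Real.zero_rpow (by linarith : p + 1 ≠ 0)]
  ring

noncomputable def tentRpow (β t₁ t₂ s : ℝ) : ℝ :=
  if s ≤ (t₁ + t₂) / 2 then (s - t₁) ^ β else (t₂ - s) ^ β

noncomputable def perturbedSegment {E : Type*} [NormedAddCommGroup E] [NormedSpace ℝ E]
    (x y σ : E) (β t₁ t₂ s : ℝ) : E :=
  x + ((s - t₁) / (t₂ - t₁)) • (y - x) + tentRpow β t₁ t₂ s • σ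

section Tent

variable {β t₁ t₂ s : ℝ}

theorem hasDerivAt_tentRpow_of_lt (hs₁ : t₁ < s) (hs : s < (t₁ + t₂) / 2) :
    HasDerivAt (tentRpow β t₁ t₂) (β * (s - t₁) ^ (β - 1)) s := by
  have h := ((hasDerivAt_id s).sub_const t₁).rpow_const (p := β) (Or.inl (sub_pos.2 hs₁).ne')
  refine (by simpa using h : HasDerivAt (fun u => (u - t₁) ^ β) _ s).congr_of_eventuallyEq ?_
  filter_upwards [Iio_mem_nhds hs] with u hu
  exact if_pos hu.le

theorem hasDerivAt_tentRpow_of_gt (hs : (t₁ + t₂) / 2 < s) (hs₂ : s < t₂) :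
    HasDerivAt (tentRpow β t₁ t₂) (-(β * (t₂ - s) ^ (β - 1))) s := by
  have h := ((hasDerivAt_id s).const_sub t₂).rpow_const (p := β) (Or.inl (sub_pos.2 hs₂).ne')
  refine (by simpa using h : HasDerivAt (fun u => (t₂ - u) ^ β) _ s).congr_of_eventuallyEq ?_
  filter_upwards [Ioi_mem_nhds hs] with u hu
  exact if_neg (not_le.2 hu)

-- Bounding by both branches at once saves splitting the time integral at the midpoint.
theorem abs_deriv_tentRpow_rpow_le {q : ℝ} (hβ : 0 ≤ β) (hs : s ∈ Ioo t₁ t₂)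
    (hm : s ≠ (t₁ + t₂) / 2) :
    |deriv (tentRpow β t₁ t₂) s| ^ q ≤
      β ^ q * ((s - t₁) ^ ((β - 1) * q) + (t₂ - s) ^ ((β - 1) * q)) := by
  have h₁ : 0 ≤ s - t₁ := sub_nonneg.2 hs.1.le
  have h₂ : 0 ≤ t₂ - s := sub_nonneg.2 hs.2.le
  have key : ∀ e, 0 ≤ e → (β * e ^ (β - 1)) ^ q = β ^ q * e ^ ((β - 1) * q) := fun e he => by
    rw [Real.mul_rpow hβ (Real.rpow_nonneg he _), Real.rpow_mul he]
  rcases hm.lt_or_gt with hm | hm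
  · rw [(hasDerivAt_tentRpow_of_lt hs.1 hm).deriv,
      abs_of_nonneg (by positivity), key _ h₁]
    gcongr
    exact le_add_of_nonneg_right (Real.rpow_nonneg h₂ _)
  · rw [(hasDerivAt_tentRpow_of_gt hm hs.2).deriv, abs_neg,
      abs_of_nonneg (by positivity), key _ h₂]
    gcongr
    exact le_add_of_nonneg_left (Real.rpow_nonneg h₁ _)

end Tent

section Segment

variable {E : Type*} [NormedAddCommGroup E] [NormedSpace ℝ E] {x y σ : E} {β t₁ t₂ s : ℝ}

theorem hasDerivAt_perturbedSegment {c : ℝ} (h : HasDerivAt (tentRpow β t₁ t₂) c s) :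
    HasDerivAt (perturbedSegment x y σ β t₁ t₂) ((t₂ - t₁)⁻¹ • (y - x) + c • σ) s := by
  have hlin : HasDerivAt (fun u : ℝ => (u - t₁) / (t₂ - t₁)) (t₂ - t₁)⁻¹ s := by
    simpa using ((hasDerivAt_id s).sub_const t₁).div_const (t₂ - t₁)
  exact ((hlin.smul_const (y - x)).const_add x).add (h.smul_const σ)

theorem norm_deriv_perturbedSegment_le (ht : t₁ < t₂) (hσ : ‖σ‖ ≤ 1) (hs : s ∈ Ioo t₁ t₂)
    (hm : s ≠ (t₁ + t₂) / 2) :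
    ‖deriv (perturbedSegment x y σ β t₁ t₂) s‖ ≤
      ‖x - y‖ / (t₂ - t₁) + |deriv (tentRpow β t₁ t₂) s| := by
  have hdiff : DifferentiableAt ℝ (tentRpow β t₁ t₂) s := by
    rcases hm.lt_or_gt with hm | hm
    · exact (hasDerivAt_tentRpow_of_lt hs.1 hm).differentiableAt
    · exact (hasDerivAt_tentRpow_of_gt hm hs.2).differentiableAt
  rw [(hasDerivAt_perturbedSegment (x := x) (y := y) (σ := σ) hdiff.hasDerivAt).deriv]
  calc _ ≤ ‖(t₂ - t₁)⁻¹ • (y - x)‖ + ‖deriv (tentRpow β t₁ t₂) s • σ‖ := norm_add_le _ _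
    _ ≤ _ := by
      rw [norm_smul, norm_smul, Real.norm_eq_abs, Real.norm_eq_abs,
        abs_of_pos (inv_pos.2 (sub_pos.2 ht)), norm_sub_rev, ← div_eq_inv_mul]
      gcongr
      exact mul_le_of_le_one_right (abs_nonneg _) hσ

theorem norm_deriv_perturbedSegment_rpow_le {q : ℝ} (hq : 1 ≤ q) (hβ : 0 ≤ β) (ht : t₁ < t₂)
    (hσ : ‖σ‖ ≤ 1) (hs : s ∈ Ioo t₁ t₂) (hm : s ≠ (t₁ + t₂) / 2) :
    ‖deriv (perturbedSegment x y σ β t₁ t₂) s‖ ^ q ≤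
      2 ^ (q - 1) * ((‖x - y‖ / (t₂ - t₁)) ^ q +
        β ^ q * ((s - t₁) ^ ((β - 1) * q) + (t₂ - s) ^ ((β - 1) * q))) := by
  have hA : 0 ≤ ‖x - y‖ / (t₂ - t₁) := div_nonneg (norm_nonneg _) (sub_pos.2 ht).le
  calc _ ≤ (‖x - y‖ / (t₂ - t₁) + |deriv (tentRpow β t₁ t₂) s|) ^ q := by
        gcongr
        exact norm_deriv_perturbedSegment_le ht hσ hs hm
    _ ≤ 2 ^ (q - 1) * ((‖x - y‖ / (t₂ - t₁)) ^ q + |deriv (tentRpow β t₁ t₂) s| ^ q) :=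
        Real.add_rpow_le_two_rpow_mul hA (abs_nonneg _) hq
    _ ≤ _ := by
      gcongr
      exact abs_deriv_tentRpow_rpow_le hβ hs hm

end Segment

theorem integral_lagrangian_perturbedSegment_le {E : Type*} [NormedAddCommGroup E]
    [NormedSpace ℝ E] {L : E → E → ℝ} {C q β t₁ t₂ : ℝ} {x y σ : E}
    (hL : ∀ x v, L x v ≤ C / q * ‖v‖ ^ q + C) (hC : 0 ≤ C) (hq : 1 ≤ q) (hβ : 0 ≤ β)
    (hp : -1 < (β - 1) * q) (ht : t₁ < t₂) (hσ : ‖σ‖ ≤ 1) :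
    ∫ s in t₁..t₂, L (perturbedSegment x y σ β t₁ t₂ s) (deriv (perturbedSegment x y σ β t₁ t₂) s)
      ≤ C / q * 2 ^ (q - 1) * (‖x - y‖ ^ q * (t₂ - t₁) ^ (1 - q) +
          β ^ q * (2 / ((β - 1) * q + 1)) * (t₂ - t₁) ^ ((β - 1) * q + 1)) + C * (t₂ - t₁) := by
  set p := (β - 1) * q
  set A := ‖x - y‖ / (t₂ - t₁)
  set K := C / q * 2 ^ (q - 1)
  have hΔ : 0 < t₂ - t₁ := sub_pos.2 ht
  let w : ℝ → ℝ := fun s => (s - t₁) ^ p + (t₂ - s) ^ p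
  let g : ℝ → ℝ := fun s => K * (A ^ q + β ^ q * w s) + C
  have hg_eq : g = fun s => (K * A ^ q + C) + K * β ^ q * w s := by
    funext s; simp only [g]; ring
  have hg_int : IntervalIntegrable g volume t₁ t₂ := by
    rw [hg_eq]
    exact intervalIntegrable_const.add ((intervalIntegrable_rpow_sub_add_rpow_sub hp).const_mul _)
  have hg_val : ∫ s in t₁..t₂, g s = K * (‖x - y‖ ^ q * (t₂ - t₁) ^ (1 - q) +
      β ^ q * (2 / (p + 1)) * (t₂ - t₁) ^ (p + 1)) + C * (t₂ - t₁) := by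
    have hA : A ^ q * (t₂ - t₁) = ‖x - y‖ ^ q * (t₂ - t₁) ^ (1 - q) := by
      rw [Real.div_rpow (norm_nonneg _) hΔ.le, Real.rpow_sub hΔ, Real.rpow_one]
      field_simp
    rw [hg_eq, intervalIntegral.integral_add intervalIntegrable_const
      ((intervalIntegrable_rpow_sub_add_rpow_sub hp).const_mul _),
      intervalIntegral.integral_const_mul, integral_rpow_sub_add_rpow_sub hp,
      intervalIntegral.integral_const, smul_eq_mul, ← hA]
    ring
  have hK : 0 ≤ K := by positivity
  have hg_nonneg : ∀ s ∈ Ioc t₁ t₂, 0 ≤ g s := fun s hs => by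
    have : 0 ≤ w s := add_nonneg (Real.rpow_nonneg (sub_nonneg.2 hs.1.le) _)
      (Real.rpow_nonneg (sub_nonneg.2 hs.2) _)
    positivity
  have hLg : ∀ s ∈ Ioo t₁ t₂, s ≠ (t₁ + t₂) / 2 →
      L (perturbedSegment x y σ β t₁ t₂ s) (deriv (perturbedSegment x y σ β t₁ t₂) s) ≤ g s :=
    fun s hs hm => calc
      _ ≤ C / q * ‖deriv (perturbedSegment x y σ β t₁ t₂) s‖ ^ q + C := hL _ _
      _ ≤ C / q * (2 ^ (q - 1) * (A ^ q + β ^ q * w s)) + C := by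
        gcongr
        exact norm_deriv_perturbedSegment_rpow_le hq hβ ht hσ hs hm
      _ = g s := by simp only [g, K]; ring
  rw [← hg_val, intervalIntegral.integral_of_le ht.le, intervalIntegral.integral_of_le ht.le]
  refine integral_mono_of_right_nonneg (ae_restrict_of_forall_mem measurableSet_Ioc hg_nonneg)
    ((intervalIntegrable_iff_integrableOn_Ioc_of_le ht.le).1 hg_int) ?_
  filter_upwards [ae_restrict_mem measurableSet_Ioc,
    ae_restrict_of_ae (volume.ae_ne ((t₁ + t₂) / 2)), ae_restrict_of_ae (volume.ae_ne t₂)]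
    with s hs hm hs₂
  exact hLg s ⟨hs.1, hs.2.lt_of_ne hs₂⟩ hm

theorem curve_cost_estimate_general
    (d : ℕ) (C r r' β : ℝ) (hC : 0 < C) (hr : 1 < r)
    (hr' : 1 / r + 1 / r' = 1)
    (hβ1 : 1 / r < β) (hβ3 : 0 < 1 - r' * (1 - β)) :
    ∃ C' > 0,
      ∀ (L : EuclideanSpace ℝ (Fin d) → EuclideanSpace ℝ (Fin d) → ℝ),
        (Continuous fun z : EuclideanSpace ℝ (Fin d) × EuclideanSpace ℝ (Fin d) =>
          L z.1 z.2) →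
        (∀ x v, 1 / (r' * C) * ‖v‖ ^ r' - C ≤ L x v) →
        (∀ x v, L x v ≤ C / r' * ‖v‖ ^ r' + C) →
      ∀ (T t₁ t₂ : ℝ) (x y : EuclideanSpace ℝ (Fin d)),
        0 ≤ t₁ → t₁ < t₂ → t₂ ≤ T → t₂ - t₁ ≤ 1 →
        (1 / (volume (Metric.closedBall (0 : EuclideanSpace ℝ (Fin d)) 1)).toReal) *
          (∫ σ in Metric.closedBall (0 : EuclideanSpace ℝ (Fin d)) 1,
            ∫ s in t₁..t₂,
              L (x + ((s - t₁) / (t₂ - t₁)) • (y - x) +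
                   (if s ≤ (t₁ + t₂) / 2 then (s - t₁) ^ β else (t₂ - s) ^ β) • σ)
                (deriv (fun u : ℝ =>
                  x + ((u - t₁) / (t₂ - t₁)) • (y - x) +
                    (if u ≤ (t₁ + t₂) / 2 then (u - t₁) ^ β else (t₂ - u) ^ β) • σ) s))
        ≤ C' * (‖x - y‖ ^ r' * (t₂ - t₁) ^ (1 - r') +
            (t₂ - t₁) ^ (1 - r' * (1 - β)) + (t₂ - t₁)) := by
  have hr'_pos : 0 < r' := one_div_pos.1 (by linarith [one_div_lt_one_div_of_lt one_pos hr])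
  have hr'_one : 1 ≤ r' := by
    have : 1 / r' ≤ 1 := by linarith [one_div_pos.2 (zero_lt_one.trans hr)]
    rwa [div_le_one hr'_pos] at this
  have hβ : 0 ≤ β := (one_div_pos.2 (zero_lt_one.trans hr)).le.trans hβ1.le
  have hp : -1 < (β - 1) * r' := by linarith
  have hexp : (β - 1) * r' + 1 = 1 - r' * (1 - β) := by ring
  set K := C / r' * 2 ^ (r' - 1)
  set c := β ^ r' * (2 / (1 - r' * (1 - β)))
  refine ⟨K * (1 + c) + C, by positivity, ?_⟩
  intro L _ _ hL T t₁ t₂ x y _ ht _ _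
  have hcost : ∀ σ ∈ Metric.closedBall (0 : EuclideanSpace ℝ (Fin d)) 1,
      ∫ s in t₁..t₂, L (perturbedSegment x y σ β t₁ t₂ s)
        (deriv (perturbedSegment x y σ β t₁ t₂) s) ≤
        K * (‖x - y‖ ^ r' * (t₂ - t₁) ^ (1 - r') + c * (t₂ - t₁) ^ (1 - r' * (1 - β))) +
          C * (t₂ - t₁) := fun σ hσ => by
    have h := integral_lagrangian_perturbedSegment_le (x := x) (y := y) hL hC.le hr'_one hβ hp ht
      (mem_closedBall_zero_iff.1 hσ)
    rwa [hexp] at h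
  have hΔ : 0 ≤ t₂ - t₁ := sub_nonneg.2 ht.le
  have hT₁ : 0 ≤ ‖x - y‖ ^ r' * (t₂ - t₁) ^ (1 - r') := by positivity
  have hT₂ : 0 ≤ (t₂ - t₁) ^ (1 - r' * (1 - β)) := by positivity
  have hc : 0 ≤ c := by positivity
  refine (one_div_measure_mul_setIntegral_le measurableSet_closedBall
    measure_closedBall_lt_top.ne (by positivity) hcost).trans ?_
  have hK : 0 ≤ K := by positivity
  linarith [mul_nonneg (mul_nonneg hK hc) hT₁, mul_nonneg hK hT₂, mul_nonneg hK hΔ,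
    mul_nonneg (mul_nonneg hK hc) hΔ, mul_nonneg hC.le hT₁, mul_nonneg hC.le hT₂]

/-- The averaged Lagrangian cost of the perturbed straight-line curves
`x_σ(s) = γ(s) + σ(s-t₁)^β` (resp. `σ(t₂-s)^β`) is bounded by
`C'(|x-y|^{r'}(t₂-t₁)^{1-r'} + (t₂-t₁)^{1-r'(1-β)} + (t₂-t₁))`, with `C'` depending only
on `C, r', β, d`. -/
theorem curve_cost_estimate
    (d : ℕ) (C r r' β : ℝ) (hC : 0 < C) (hr : 1 < r)
    (hr' : 1 / r + 1 / r' = 1)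
    (hβ1 : 1 / r < β) (hβ2 : β < 1) (hβ3 : 0 < 1 - r' * (1 - β)) :
    ∃ C' > 0,
      ∀ (L : EuclideanSpace ℝ (Fin d) → EuclideanSpace ℝ (Fin d) → ℝ),
        (Continuous fun z : EuclideanSpace ℝ (Fin d) × EuclideanSpace ℝ (Fin d) =>
          L z.1 z.2) →
        (∀ x v, 1 / (r' * C) * ‖v‖ ^ r' - C ≤ L x v) →
        (∀ x v, L x v ≤ C / r' * ‖v‖ ^ r' + C) →
      ∀ (T t₁ t₂ : ℝ) (x y : EuclideanSpace ℝ (Fin d)),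
        0 ≤ t₁ → t₁ < t₂ → t₂ ≤ T → t₂ - t₁ ≤ 1 →
        (1 / (volume (Metric.closedBall (0 : EuclideanSpace ℝ (Fin d)) 1)).toReal) *
          (∫ σ in Metric.closedBall (0 : EuclideanSpace ℝ (Fin d)) 1,
            ∫ s in t₁..t₂,
              L (x + ((s - t₁) / (t₂ - t₁)) • (y - x) +
                   (if s ≤ (t₁ + t₂) / 2 then (s - t₁) ^ β else (t₂ - s) ^ β) • σ)
                (deriv (fun u : ℝ =>
                  x + ((u - t₁) / (t₂ - t₁)) • (y - x) +
                    (if u ≤ (t₁ + t₂) / 2 then (u - t₁) ^ β else (t₂ - u) ^ β) • σ) s))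
        ≤ C' * (‖x - y‖ ^ r' * (t₂ - t₁) ^ (1 - r') +
            (t₂ - t₁) ^ (1 - r' * (1 - β)) + (t₂ - t₁)) :=
  curve_cost_estimate_general d C r r' β hC hr hr' hβ1 hβ3
end
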